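/- If G is a connected, claw-free, cubic graph, then σ_{(3,1)}(G) ≤ β(G) + 1. -/

import Mathlib

open SimpleGraph Set

variable {V : Type*}

/-- One step of the (p,q)-spreading color change rule: a white vertex `w` with at least `p`
blue neighbors, at least one of which has at most `q` white neighbors, becomes blue. -/
def spreadStep (G : SimpleGraph V) (p : ℕ) (q : ℕ∞) (B : Set V) : Set V :=
  B ∪ {w | p ≤ (G.neighborSet w ∩ B).ncard ∧
      ∃ u ∈ G.neighborSet w ∩ B, ((G.neighborSet u \ B).ncard : ℕ∞) ≤ q}

/-- `S` is a (p,q)-spreading set if iterating the rule eventually colors all vertices blue. -/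
def IsSpreadingSet (G : SimpleGraph V) (p : ℕ) (q : ℕ∞) (S : Set V) : Prop :=
  ∃ n : ℕ, (spreadStep G p q)^[n] S = Set.univ

/-- The (p,q)-spreading number σ_{(p,q)}(G). -/
noncomputable def spreadNumber (G : SimpleGraph V) (p : ℕ) (q : ℕ∞) : ℕ :=
  sInf {k | ∃ S : Set V, S.ncard = k ∧ IsSpreadingSet G p q S}

/-- One step of r-neighbor bootstrap percolation. -/
def percStep (G : SimpleGraph V) (r : ℕ) (B : Set V) : Set V :=
  B ∪ {w | r ≤ (G.neighborSet w ∩ B).ncard}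

/-- `S` is an r-percolating set of `G`. -/
def IsPercolating (G : SimpleGraph V) (r : ℕ) (S : Set V) : Prop :=
  ∃ n : ℕ, (percStep G r)^[n] S = Set.univ

/-- The r-percolation number m(G,r). -/
noncomputable def percNumber (G : SimpleGraph V) (r : ℕ) : ℕ :=
  sInf {k | ∃ S : Set V, S.ncard = k ∧ IsPercolating G r S}

/-- A vertex cover of `G`. -/
def IsVertexCover (G : SimpleGraph V) (C : Set V) : Prop :=
  ∀ ⦃u v : V⦄, G.Adj u v → u ∈ C ∨ v ∈ C

/-- The vertex cover number β(G). -/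
noncomputable def coverNumber (G : SimpleGraph V) : ℕ :=
  sInf {k | ∃ C : Set V, C.ncard = k ∧ _root_.IsVertexCover G C}

/-- An independent set of `G`. -/
def IsIndep (G : SimpleGraph V) (I : Set V) : Prop :=
  I.Pairwise fun u v => ¬ G.Adj u v

/-- The independence number α(G). -/
noncomputable def indepNumber (G : SimpleGraph V) : ℕ :=
  sSup {k | ∃ I : Set V, I.ncard = k ∧ IsIndep G I}

/-- `G` has no induced `K_{1,3}`. -/
def ClawFree (G : SimpleGraph V) : Prop :=
  ¬ ∃ v a b c : V, a ≠ b ∧ a ≠ c ∧ b ≠ c ∧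
    G.Adj v a ∧ G.Adj v b ∧ G.Adj v c ∧ ¬ G.Adj a b ∧ ¬ G.Adj a c ∧ ¬ G.Adj b c

/-- The set `T` is (the vertex set of) a triangle of `G`. -/
def IsTriangle (G : SimpleGraph V) (T : Set V) : Prop :=
  ∃ a b c : V, a ≠ b ∧ a ≠ c ∧ b ≠ c ∧
    G.Adj a b ∧ G.Adj a c ∧ G.Adj b c ∧ T = {a, b, c}

/-- The set `D` induces a diamond (`K_4` minus the edge `ab`) in `G`. -/
def IsDiamond (G : SimpleGraph V) (D : Set V) : Prop :=
  ∃ a b c d : V, a ≠ b ∧ a ≠ c ∧ a ≠ d ∧ b ≠ c ∧ b ≠ d ∧ c ≠ d ∧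
    ¬ G.Adj a b ∧ G.Adj a c ∧ G.Adj a d ∧ G.Adj b c ∧ G.Adj b d ∧ G.Adj c d ∧
    D = {a, b, c, d}

/-- `P` is a partition of the vertex set of `G` into sets each inducing a triangle
or a diamond (a triangle-diamond partition). -/
def IsTDPartition (G : SimpleGraph V) (P : Set (Set V)) : Prop :=
  (∀ S ∈ P, IsTriangle G S ∨ IsDiamond G S) ∧ ∀ v : V, ∃! S : Set V, S ∈ P ∧ v ∈ S

/-- The diamond-necklace `N_k`: the vertex `(i, 0)` is `a_i`, `(i, 1)` is `b_i`,
`(i, 2)` is `c_i`, `(i, 3)` is `d_i`; inside each diamond all edges except `a_i b_i`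
are present, and consecutive diamonds are linked by the edges `a_i b_{i+1}`. -/
def diamondNecklace (k : ℕ) : SimpleGraph (ZMod k × Fin 4) :=
  SimpleGraph.fromRel (fun x y =>
    (x.1 = y.1 ∧ ¬ (x.2 = 0 ∧ y.2 = 1) ∧ ¬ (x.2 = 1 ∧ y.2 = 0))
    ∨ (y.1 = x.1 + 1 ∧ x.2 = 0 ∧ y.2 = 1))

/-- The triangle-necklace `F_{2k}`: the vertex `(j, 0)` is `x_{j+1}`, `(j, 1)` is `y_{j+1}`,
`(j, 2)` is `z_{j+1}`; each triple `{x,y,z}` with the same first coordinate is a triangle,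
and the triangles are linked by the edges `x_{2i-1}x_{2i}`, `y_{2i-1}y_{2i}` and
`z_{2i}z_{2i+1}` (indices modulo `2k`). -/
def triangleNecklace (k : ℕ) : SimpleGraph (ZMod (2 * k) × Fin 3) :=
  SimpleGraph.fromRel (fun x y =>
    (x.1 = y.1 ∧ x.2 ≠ y.2)
    ∨ (y.1 = x.1 + 1 ∧ Even x.1.val ∧ ((x.2 = 0 ∧ y.2 = 0) ∨ (x.2 = 1 ∧ y.2 = 1)))
    ∨ (y.1 = x.1 + 1 ∧ Odd x.1.val ∧ x.2 = 2 ∧ y.2 = 2))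

/-!
Take a minimum vertex cover `C` and one vertex `w₀` outside it, and look at a fixed point of the
color change rule above `C ∪ {w₀}`. The white vertices lie outside `C`, so they are independent
and all their neighbours are blue; since no white vertex can change color, every neighbour of a
white vertex has at least two white neighbours. In a claw-free graph this makes the white
vertices together with their neighbours closed under adjacency, hence, by connectivity, all of
`V`. But `w₀` is blue and, lying outside `C`, not adjacent to any white vertex.
-/

lemma IsVertexCover.isIndep_compl {G : SimpleGraph V} {C : Set V} (hC : _root_.IsVertexCover G C) :
    IsIndep G Cᶜ :=
  fun _ hu _ hv _ huv => (hC huv).elim hu hv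

lemma exists_isVertexCover_ncard_eq_coverNumber (G : SimpleGraph V) :
    ∃ C : Set V, C.ncard = coverNumber G ∧ _root_.IsVertexCover G C :=
  Nat.sInf_mem (⟨_, univ, rfl, fun u _ _ => Or.inl (mem_univ u)⟩ :
    {k | ∃ C : Set V, C.ncard = k ∧ _root_.IsVertexCover G C}.Nonempty)

lemma spreadNumber_le_ncard {G : SimpleGraph V} {p : ℕ} {q : ℕ∞} {S : Set V}
    (hS : IsSpreadingSet G p q S) : spreadNumber G p q ≤ S.ncard :=
  Nat.sInf_le ⟨S, rfl, hS⟩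

lemma subset_spreadStep (G : SimpleGraph V) (p : ℕ) (q : ℕ∞) (B : Set V) :
    B ⊆ spreadStep G p q B :=
  subset_union_left

lemma isSpreadingSet_of_forall_fixedPoint [Finite V] {G : SimpleGraph V} {p : ℕ} {q : ℕ∞}
    {S : Set V} (h : ∀ F, S ⊆ F → spreadStep G p q F = F → F = univ) :
    IsSpreadingSet G p q S := by
  have hmono : Monotone fun n => (spreadStep G p q)^[n] S :=
    monotone_nat_of_le_succ fun n => by
      rw [Function.iterate_succ_apply']
      exact subset_spreadStep G p q _
  obtain ⟨n, hn⟩ := WellFoundedGT.monotone_chain_condition ⟨_, hmono⟩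
  refine ⟨n, h _ (hmono (Nat.zero_le n)) ?_⟩
  rw [← Function.iterate_succ_apply' (spreadStep G p q)]
  exact (hn (n + 1) n.le_succ).symm

lemma mem_spreadStep_of_neighborSet_subset {G : SimpleGraph V} {p : ℕ} {q : ℕ∞} {B : Set V}
    {w u : V} (hwB : G.neighborSet w ⊆ B) (hw : p ≤ (G.neighborSet w).ncard)
    (hwu : G.Adj w u) (hu : ((G.neighborSet u \ B).ncard : ℕ∞) ≤ q) :
    w ∈ spreadStep G p q B :=
  Or.inr ⟨by rwa [inter_eq_self_of_subset_left hwB], u, ⟨hwu, hwB hwu⟩, hu⟩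

lemma SimpleGraph.Preconnected.mem_of_adj_closed {G : SimpleGraph V} (hG : G.Preconnected)
    {M : Set V} {v : V} (hv : v ∈ M) (hM : ∀ x ∈ M, ∀ y, G.Adj x y → y ∈ M) (y : V) : y ∈ M := by
  induction (reachable_iff_reflTransGen v y).mp (hG v y) with
  | refl => exact hv
  | tail _ hxy ih => exact hM _ ih _ hxy

/-- A vertex `x` adjacent to `w₁ ≠ w₂` in `W` would form a claw with any neighbour outside
`W ∪ N(W)`, so `W ∪ N(W)` is closed under adjacency. -/
lemma ClawFree.dominating_of_isIndep {G : SimpleGraph V} (hcf : ClawFree G) (hG : G.Connected)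
    {W : Set V} (hW : IsIndep G W) (hne : W.Nonempty)
    (htwo : ∀ w ∈ W, ∀ x, G.Adj w x → ∃ w₁ ∈ W, ∃ w₂ ∈ W, w₁ ≠ w₂ ∧ G.Adj x w₁ ∧ G.Adj x w₂)
    (v : V) : v ∈ W ∨ ∃ w ∈ W, G.Adj w v := by
  set M : Set V := W ∪ {v | ∃ w ∈ W, G.Adj w v}
  have hclosed : ∀ x ∈ M, ∀ y, G.Adj x y → y ∈ M := by
    rintro x (hx | ⟨w, hw, hwx⟩) y hxy
    · exact Or.inr ⟨x, hx, hxy⟩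
    by_contra hyM
    obtain ⟨w₁, hw₁, w₂, hw₂, hne₁₂, hxw₁, hxw₂⟩ := htwo w hw x hwx
    have hy₁ : w₁ ≠ y := fun h => hyM (Or.inl (h ▸ hw₁))
    have hy₂ : w₂ ≠ y := fun h => hyM (Or.inl (h ▸ hw₂))
    exact hcf ⟨x, w₁, w₂, y, hne₁₂, hy₁, hy₂, hxw₁, hxw₂, hxy, hW hw₁ hw₂ hne₁₂,
      fun h => hyM (Or.inr ⟨w₁, hw₁, h⟩), fun h => hyM (Or.inr ⟨w₂, hw₂, h⟩)⟩
  obtain ⟨w, hw⟩ := hne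
  exact hG.preconnected.mem_of_adj_closed (M := M) (Or.inl hw) hclosed v

lemma ClawFree.isSpreadingSet_insert_of_isVertexCover [Finite V] {G : SimpleGraph V} {p : ℕ}
    (hcf : ClawFree G) (hG : G.Connected) (hdeg : ∀ v, p ≤ (G.neighborSet v).ncard)
    {C : Set V} (hC : _root_.IsVertexCover G C) {w₀ : V} (hw₀ : w₀ ∉ C) :
    IsSpreadingSet G p 1 (insert w₀ C) := by
  refine isSpreadingSet_of_forall_fixedPoint fun F hF hfix => ?_
  by_contra hFne
  have hWC : Fᶜ ⊆ Cᶜ := compl_subset_compl.mpr ((subset_insert _ _).trans hF)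
  have hindep : IsIndep G (insert w₀ Fᶜ) := hC.isIndep_compl.mono (insert_subset hw₀ hWC)
  have hnbr : ∀ w ∈ Fᶜ, G.neighborSet w ⊆ F := fun w hw u hwu =>
    of_not_not fun hu => hindep (mem_insert_of_mem _ hw) (mem_insert_of_mem _ hu) hwu.ne hwu
  have htwo : ∀ w ∈ Fᶜ, ∀ x, G.Adj w x →
      ∃ w₁ ∈ Fᶜ, ∃ w₂ ∈ Fᶜ, w₁ ≠ w₂ ∧ G.Adj x w₁ ∧ G.Adj x w₂ := by
    intro w hw x hwx
    have hfire : ¬ ((G.neighborSet x \ F).ncard : ℕ∞) ≤ 1 := fun hx =>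
      hw (hfix ▸ mem_spreadStep_of_neighborSet_subset (hnbr w hw) (hdeg w) hwx hx)
    obtain ⟨w₁, w₂, ⟨hxw₁, hw₁⟩, ⟨hxw₂, hw₂⟩, hne⟩ :=
      (one_lt_ncard_iff (toFinite _)).mp (by exact_mod_cast not_le.mp hfire)
    exact ⟨w₁, hw₁, w₂, hw₂, hne, hxw₁, hxw₂⟩
  rcases hcf.dominating_of_isIndep hG (hindep.mono (subset_insert _ _))
    (nonempty_compl.mpr hFne) htwo w₀ with hw₀F | ⟨w, hw, hww₀⟩
  · exact hw₀F (hF (mem_insert _ _))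
  · exact hindep (mem_insert_of_mem _ hw) (mem_insert _ _)
      (fun h => hw (h ▸ hF (mem_insert _ _))) hww₀

theorem stmt11 {V : Type*} [Fintype V] (G : SimpleGraph V)
    (hconn : G.Connected) (hcf : ClawFree G)
    (hcub : ∀ v : V, (G.neighborSet v).ncard = 3) :
    spreadNumber G 3 1 ≤ coverNumber G + 1 := by
  obtain ⟨C, hCcard, hC⟩ := exists_isVertexCover_ncard_eq_coverNumber G
  by_cases hCuniv : C = univ
  · subst hCuniv
    have : spreadNumber G 3 1 ≤ (univ : Set V).ncard :=
      spreadNumber_le_ncard ⟨0, rfl⟩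
    omega
  · obtain ⟨w₀, hw₀⟩ := (ne_univ_iff_exists_notMem C).mp hCuniv
    have hS := hcf.isSpreadingSet_insert_of_isVertexCover hconn (fun v => (hcub v).ge) hC hw₀
    calc spreadNumber G 3 1 ≤ (insert w₀ C).ncard := spreadNumber_le_ncard hS
      _ = coverNumber G + 1 := by rw [ncard_insert_of_notMem hw₀ (toFinite C), hCcard]
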